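/- (Coincidence point theorem) Let (M, d) be a complete metric space and S, T : C → C maps on a set C with T(C) ⊆ S(C), where S(C) is complete with respect to d. Suppose there are constants a, b_c ≥ 0 with a + b_c > 0 and 0 ≤ r < a + b_c such that a·d(Tx, Ty) + b_c(d(Sx, Tx) + d(Sy, Ty)) ≤ r·d(Sx, Sy) for all x, y ∈ C. Then there exists p ∈ C with Sp = Tp. -/
import Mathlib


/-- Coincidence point theorem: under the compatibility-type contraction with
T(C) ⊆ S(C) and S(C) complete, S and T have a coincidence point in C. -/
theorem coincidence_point
    {α : Type*} [MetricSpace α]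
    (C : Set α) (hC : C.Nonempty)
    (S T : α → α)
    (hS : Set.MapsTo S C C) (hT : Set.MapsTo T C C)
    (hTS : T '' C ⊆ S '' C)
    (hcomp : IsComplete (S '' C))
    (a b_c r : ℝ) (ha : 0 ≤ a) (hb : 0 ≤ b_c) (hab : 0 < a + b_c)
    (hr0 : 0 ≤ r) (hr : r < a + b_c)
    (hcontr : ∀ x ∈ C, ∀ y ∈ C,
      a * dist (T x) (T y) + b_c * (dist (S x) (T x) + dist (S y) (T y))
        ≤ r * dist (S x) (S y)) :
    ∃ p ∈ C, S p = T p := by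
  classical
  obtain ⟨x0, hx0⟩ := hC
  have hstep : ∀ p : {q : α // q ∈ C}, ∃ q : {q : α // q ∈ C}, S q.1 = T p.1 := by
    rintro ⟨p, hp⟩
    obtain ⟨q, hq, hq'⟩ := hTS ⟨p, hp, rfl⟩
    exact ⟨⟨q, hq⟩, hq'⟩
  choose g hg using hstep
  set x : ℕ → {q : α // q ∈ C} := fun n => Nat.rec ⟨x0, hx0⟩ (fun _ p => g p) n with hx
  have hxs : ∀ n, x (n + 1) = g (x n) := fun n => rfl
  set z : ℕ → α := fun n => S (x n).1 with hz
  have hzT : ∀ n, z (n + 1) = T (x n).1 := by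
    intro n; rw [hz]; simp only [hxs]; exact hg (x n)
  set k : ℝ := r / (a + b_c) with hk
  have hk0 : 0 ≤ k := div_nonneg hr0 hab.le
  have hk1 : k < 1 := (div_lt_one hab).mpr hr
  have key : ∀ n, dist (z (n + 1)) (z (n + 2)) ≤ k * dist (z n) (z (n + 1)) := by
    intro n
    have h := hcontr (x n).1 (x n).2 (x (n + 1)).1 (x (n + 1)).2
    rw [← hzT n, ← hzT (n + 1)] at h
    have hD : 0 ≤ dist (z (n+1)) (z (n+2)) := dist_nonneg
    have hE : 0 ≤ dist (z n) (z (n+1)) := dist_nonneg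
    rw [hk, div_mul_eq_mul_div, le_div_iff₀ hab]
    nlinarith [h]
  have hgeo : ∀ n, dist (z n) (z (n + 1)) ≤ dist (z 0) (z 1) * k ^ n := by
    intro n
    induction n with
    | zero => simp
    | succ m ih =>
      calc dist (z (m + 1)) (z (m + 2)) ≤ k * dist (z m) (z (m + 1)) := key m
        _ ≤ k * (dist (z 0) (z 1) * k ^ m) := by
            exact mul_le_mul_of_nonneg_left ih hk0
        _ = dist (z 0) (z 1) * k ^ (m + 1) := by ring
  have hcauchy : CauchySeq z := cauchySeq_of_le_geometric k (dist (z 0) (z 1)) hk1 hgeo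
  have hmem : ∀ n, z n ∈ S '' C := fun n => ⟨(x n).1, (x n).2, rfl⟩
  obtain ⟨q, hqmem, hlim⟩ := cauchySeq_tendsto_of_isComplete hcomp hmem hcauchy
  obtain ⟨p, hp, hpq⟩ := hqmem
  refine ⟨p, hp, ?_⟩
  have hlim1 : Filter.Tendsto (fun n => z (n + 1)) Filter.atTop (nhds q) :=
    hlim.comp (Filter.tendsto_add_atTop_nat 1)
  have hineq : ∀ n, a * dist (z (n + 1)) (T p)
      + b_c * (dist (z n) (z (n + 1)) + dist (S p) (T p))
      ≤ r * dist (z n) (S p) := by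
    intro n
    have h := hcontr (x n).1 (x n).2 p hp
    rw [← hzT n] at h
    exact h
  have hF : Filter.Tendsto (fun n => a * dist (z (n + 1)) (T p)
      + b_c * (dist (z n) (z (n + 1)) + dist (S p) (T p))) Filter.atTop
      (nhds (a * dist q (T p) + b_c * (dist q q + dist (S p) (T p)))) := by
    exact ((hlim1.dist tendsto_const_nhds).const_mul a).add
      (((hlim.dist hlim1).add tendsto_const_nhds).const_mul b_c)
  have hG : Filter.Tendsto (fun n => r * dist (z n) (S p)) Filter.atTop
      (nhds (r * dist q (S p))) :=
    (hlim.dist tendsto_const_nhds).const_mul r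
  have hfin := le_of_tendsto_of_tendsto' hF hG hineq
  rw [← hpq] at hfin
  simp only [dist_self] at hfin
  have hd : dist (S p) (T p) = 0 := by
    nlinarith [dist_nonneg (x := S p) (y := T p), hfin]
  exact dist_eq_zero.mp hd
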